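/- Let 𝔽_q be a finite field and γ ≠ 0 an element of degree g over 𝔽_q in a finite extension 𝔽_q[γ]. Then for any n×n matrix M with entries in 𝔽_q and any positive integer r, the regular-rigidity satisfies r_M^{𝔽_q}(g·r) ≤ r_M^{𝔽_q[γ]}(r). That is, if M can be written as E + A over 𝔽_q[γ] with E having at most s nonzero entries per row and column and rank(A) ≤ r, then M can be so written over 𝔽_q with sparsity s per row/column and rank at most g·r. -/

import Mathlib

open Matrix

open scoped Classical in
noncomputable def regRigidity {ι : Type*} {F : Type*} [Fintype ι] [Field F]
    (M : Matrix ι ι F) (r : ℕ) : ℕ :=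
  sInf {s : ℕ | ∃ E : Matrix ι ι F,
    (∀ i, (Finset.univ.filter fun j => E i j ≠ 0).card ≤ s) ∧
    (∀ j, (Finset.univ.filter fun i => E i j ≠ 0).card ≤ s) ∧
    (M - E).rank ≤ r}

/-!
Fix an `Fq`-linear functional `φ : K → Fq` that is a left inverse of `algebraMap Fq K`.
Applying `φ` entrywise to a decomposition `M = E + A` over `K` gives `M = φ(E) + φ(A)` over `Fq`.
The matrix `φ(E)` has no more nonzero entries than `E` in any row or column, and the column
space of `φ(A)` lies in the image under `φ` of the column space of `A` viewed as an
`Fq`-space, which has dimension `[K : Fq] · rank A`.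
-/

open Finset

theorem Submodule.finrank_restrictScalars_eq_mul (k : Type*) {K V : Type*} [Field k] [Field K]
    [Algebra k K] [AddCommGroup V] [Module K V] [Module k V] [IsScalarTower k K V]
    (p : Submodule K V) :
    Module.finrank k (p.restrictScalars k) = Module.finrank k K * Module.finrank K p :=
  ((Submodule.restrictScalarsEquiv k K V p).restrictScalars k).finrank_eq.trans
    (Module.finrank_mul_finrank k K p).symm

theorem Matrix.mulVecLin_map_eq {k K : Type*} [Field k] [Field K] [Algebra k K]
    {m n : Type*} [Fintype n] (A : Matrix m n K) (φ : K →ₗ[k] k) :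
    (A.map φ).mulVecLin = φ.compLeft m ∘ₗ A.mulVecLin.restrictScalars k ∘ₗ
      (Algebra.linearMap k K).compLeft n := by
  ext x i
  simp only [LinearMap.comp_apply, mulVecLin_apply, mulVec, dotProduct, map_apply,
    LinearMap.compLeft_apply, LinearMap.restrictScalars_apply, Function.comp_apply,
    Algebra.linearMap_apply, map_sum]
  refine Finset.sum_congr rfl fun j _ => ?_
  rw [← Algebra.commutes, ← Algebra.smul_def, map_smul, smul_eq_mul, mul_comm]

theorem Matrix.rank_map_le_finrank_mul_rank {k K : Type*} [Field k] [Field K] [Algebra k K]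
    [FiniteDimensional k K] {m n : Type*} [Fintype m] [Fintype n] (A : Matrix m n K)
    (φ : K →ₗ[k] k) :
    (A.map φ).rank ≤ Module.finrank k K * A.rank := by
  rw [Matrix.rank, Matrix.rank, ← Submodule.finrank_restrictScalars_eq_mul k, mulVecLin_map_eq,
    ← LinearMap.range_restrictScalars]
  calc _ ≤ Module.finrank k (φ.compLeft m ∘ₗ A.mulVecLin.restrictScalars k).range :=
        Submodule.finrank_mono (LinearMap.range_comp_le_range _ _)
    _ ≤ _ := by rw [LinearMap.range_comp]; exact Submodule.finrank_map_le _ _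

open scoped Classical in
theorem Finset.card_filter_comp_ne_zero_le {ι α β : Type*} [Zero α] [Zero β] {f : α → β}
    (hf : f 0 = 0) (s : Finset ι) (v : ι → α) :
    #{i ∈ s | f (v i) ≠ 0} ≤ #{i ∈ s | v i ≠ 0} :=
  Finset.card_le_card <| Finset.monotone_filter_right s fun _ _ hfv hv => hfv (by rw [hv, hf])

section regRigidity

variable {ι F : Type*} [Fintype ι] [Field F]

open scoped Classical in
theorem regRigidity_le {M E : Matrix ι ι F} {r s : ℕ}
    (hrow : ∀ i, #{j | E i j ≠ 0} ≤ s) (hcol : ∀ j, #{i | E i j ≠ 0} ≤ s)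
    (hrank : (M - E).rank ≤ r) : regRigidity M r ≤ s :=
  Nat.sInf_le ⟨E, hrow, hcol, hrank⟩

open scoped Classical in
theorem exists_regRigidity_witness (M : Matrix ι ι F) (r : ℕ) :
    ∃ E : Matrix ι ι F, (∀ i, #{j | E i j ≠ 0} ≤ regRigidity M r) ∧
      (∀ j, #{i | E i j ≠ 0} ≤ regRigidity M r) ∧ (M - E).rank ≤ r := by
  have hne : {s | ∃ E : Matrix ι ι F, (∀ i, #{j | E i j ≠ 0} ≤ s) ∧
      (∀ j, #{i | E i j ≠ 0} ≤ s) ∧ (M - E).rank ≤ r}.Nonempty :=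
    ⟨Fintype.card ι, M, fun _ => card_filter_le _ _, fun _ => card_filter_le _ _, by simp⟩
  exact Nat.sInf_mem hne

end regRigidity

theorem regRigidity_descend_field_general
    {Fq : Type*} [Field Fq] {K : Type*} [Field K] [Algebra Fq K]
    [FiniteDimensional Fq K]
    {n : ℕ} (M : Matrix (Fin n) (Fin n) Fq) (r : ℕ) :
    regRigidity M (Module.finrank Fq K * r) ≤
      regRigidity (M.map (algebraMap Fq K)) r := by
  obtain ⟨φ, hφ⟩ := (Algebra.linearMap Fq K).exists_leftInverse_of_injective
    (LinearMap.ker_eq_bot.mpr (algebraMap Fq K).injective)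
  have hφ_algebraMap (c : Fq) : φ (algebraMap Fq K c) = c := LinearMap.congr_fun hφ c
  obtain ⟨E, hrow, hcol, hrank⟩ := exists_regRigidity_witness (M.map (algebraMap Fq K)) r
  refine regRigidity_le (E := E.map φ)
    (fun i => (Finset.card_filter_comp_ne_zero_le φ.map_zero _ _).trans (hrow i))
    (fun j => (Finset.card_filter_comp_ne_zero_le φ.map_zero _ _).trans (hcol j)) ?_
  calc (M - E.map φ).rank = ((M.map (algebraMap Fq K) - E).map φ).rank := by
        congr 1; ext i j; simp [hφ_algebraMap]
    _ ≤ Module.finrank Fq K * (M.map (algebraMap Fq K) - E).rank :=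
        rank_map_le_finrank_mul_rank _ φ
    _ ≤ Module.finrank Fq K * r := Nat.mul_le_mul_left _ hrank

/-- Let `𝔽_q` be a finite field and `γ ≠ 0` generate a finite extension
`K = 𝔽_q[γ]` of degree `g`.  For any matrix `M` over `𝔽_q` and positive
integer `r`, `r_M^{𝔽_q}(g·r) ≤ r_M^{𝔽_q[γ]}(r)`. -/
theorem regRigidity_descend_field
    {Fq : Type*} [Field Fq] [Fintype Fq] {K : Type*} [Field K] [Algebra Fq K]
    [FiniteDimensional Fq K] (γ : K) (hγ : γ ≠ 0)
    (hgen : Algebra.adjoin Fq ({γ} : Set K) = ⊤)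
    {n : ℕ} (M : Matrix (Fin n) (Fin n) Fq) (r : ℕ) (hr : 0 < r) :
    regRigidity M (Module.finrank Fq K * r) ≤
      regRigidity (M.map (algebraMap Fq K)) r :=
  regRigidity_descend_field_general M r
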